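/- Decreasing-monotonic (readd) refactoring theorem (correctness and no code duplication): for every base program B : α → Option β and every list L of conditional delta operations, there exist a base program B' and a list L' of conditional delta operations such that: (i) for every product p, variant B' L' p = variant B L p; (ii) every operation of L' is either a remove (payload none) or a readd, i.e. an add (c, k, some d) whose reference satisfies B' k ≠ none; (iii) L'.length ≤ L.length; (iv) for every reference k, either B' k = B k, or B k = none and there exist c and d with (c, k, some d) ∈ L and B' k = some d; and (v) every add (c', k, some d) of L' satisfies ∃ c, (c, k, some d) ∈ L. -/

import Mathlib

/-!
Process `L` from left to right, maintaining an equivalent readd-monotonic SPL `(B', L')`.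
A remove, or an add on a reference already declared in `B'`, is appended as it is. An add
`(c, k, some d)` on a reference absent from `B'` is the only problematic step: then every
earlier operation on `k` is a remove acting on an absent reference, hence dead, so it can be
dropped; declaring `k ↦ d` in the base and appending the remove `(¬ c, k, none)` instead of
the add yields the same variants.
-/

open Classical in
/-- The variant generated for product `p` from base program `B` and list `L` of
conditional delta operations. -/
noncomputable def variant {α β ρ : Type*} (B : α → Option β)
    (L : List ((ρ → Prop) × α × Option β)) (p : ρ) : α → Option β :=
  L.foldl (fun P op => if op.1 p then Function.update P op.2.1 op.2.2 else P) B

open Function Classical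

section Variant

variable {α β ρ : Type*}

theorem variant_cons (P : α → Option β) (op : (ρ → Prop) × α × Option β)
    (L : List ((ρ → Prop) × α × Option β)) (p : ρ) :
    variant P (op :: L) p =
      variant (if op.1 p then update P op.2.1 op.2.2 else P) L p := rfl

theorem variant_append_singleton (P : α → Option β) (L : List ((ρ → Prop) × α × Option β))
    (op : (ρ → Prop) × α × Option β) (p : ρ) :
    variant P (L ++ [op]) p =
      if op.1 p then update (variant P L p) op.2.1 op.2.2 else variant P L p := by
  simp [variant, List.foldl_append]

theorem variant_update_of_forall_ne {L : List ((ρ → Prop) × α × Option β)} {k : α}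
    (hL : ∀ op ∈ L, op.2.1 ≠ k) (P : α → Option β) (v : Option β) (p : ρ) :
    variant (update P k v) L p = update (variant P L p) k v := by
  induction L generalizing P with
  | nil => rfl
  | cons op L ih =>
    have hop : op.2.1 ≠ k := hL op List.mem_cons_self
    have hstep : (if op.1 p then update (update P k v) op.2.1 op.2.2 else update P k v) =
        update (if op.1 p then update P op.2.1 op.2.2 else P) k v := by
      split_ifs
      · exact update_comm hop.symm v op.2.2 P
      · rfl
    rw [variant_cons, variant_cons, hstep]
    exact ih (fun op' h => hL op' (List.mem_cons_of_mem _ h)) _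

theorem variant_apply_of_forall_ne {L : List ((ρ → Prop) × α × Option β)} {k : α}
    (hL : ∀ op ∈ L, op.2.1 ≠ k) (P : α → Option β) (p : ρ) :
    variant P L p k = P k := by
  conv_lhs => rw [← update_eq_self k P, variant_update_of_forall_ne hL]
  exact update_self ..

theorem variant_filter_ne_of_remove {L : List ((ρ → Prop) × α × Option β)}
    {k : α} (hL : ∀ op ∈ L, op.2.1 = k → op.2.2 = none) {P : α → Option β} (hP : P k = none)
    (p : ρ) :
    variant P (L.filter (·.2.1 ≠ k)) p = variant P L p := by
  induction L generalizing P with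
  | nil => rfl
  | cons op L ih =>
    have hL' := fun op' h => hL op' (List.mem_cons_of_mem _ h)
    by_cases hk : op.2.1 = k
    · have hstep : (if op.1 p then update P op.2.1 op.2.2 else P) = P := by
        rw [hk, hL op List.mem_cons_self hk, ← hP, update_eq_self, ite_self]
      rw [List.filter_cons_of_neg (by simp [hk]), variant_cons, hstep]
      exact ih hL' hP
    · rw [List.filter_cons_of_pos (by simp [hk]), variant_cons, variant_cons]
      refine ih hL' ?_
      split_ifs
      · rw [update_of_ne (Ne.symm hk), hP]
      · exact hP

end Variant

section Refactoring

variable {α β ρ : Type*}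

structure IsReaddRefactoring (B : α → Option β) (L : List ((ρ → Prop) × α × Option β))
    (B' : α → Option β) (L' : List ((ρ → Prop) × α × Option β)) : Prop where
  variant_eq : ∀ p : ρ, variant B' L' p = variant B L p
  remove_or_readd : ∀ op ∈ L', op.2.2 = none ∨ (∃ d : β, op.2.2 = some d) ∧ B' op.2.1 ≠ none
  length_le : L'.length ≤ L.length
  base_eq_or_added : ∀ k : α, B' k = B k ∨
    (B k = none ∧ ∃ (c : ρ → Prop) (d : β), (c, k, some d) ∈ L ∧ B' k = some d)
  add_mem : ∀ (c' : ρ → Prop) (k : α) (d : β), (c', k, some d) ∈ L' →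
    ∃ c : ρ → Prop, (c, k, some d) ∈ L

namespace IsReaddRefactoring

theorem nil (B : α → Option β) :
    IsReaddRefactoring B ([] : List ((ρ → Prop) × α × Option β)) B [] where
  variant_eq _ := rfl
  remove_or_readd := by simp
  length_le := le_rfl
  base_eq_or_added _ := Or.inl rfl
  add_mem := by simp

variable {B B' : α → Option β} {L L' : List ((ρ → Prop) × α × Option β)}

theorem append (h : IsReaddRefactoring B L B' L') (op : (ρ → Prop) × α × Option β)
    (hop : op.2.2 = none ∨ (∃ d : β, op.2.2 = some d) ∧ B' op.2.1 ≠ none) :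
    IsReaddRefactoring B (L ++ [op]) B' (L' ++ [op]) where
  variant_eq p := by rw [variant_append_singleton, variant_append_singleton, h.variant_eq]
  remove_or_readd op' hop' := by
    rcases List.mem_append.1 hop' with hop' | hop'
    · exact h.remove_or_readd op' hop'
    · rwa [List.mem_singleton.1 hop']
  length_le := by simpa using h.length_le
  base_eq_or_added k := by
    rcases h.base_eq_or_added k with hk | ⟨hBk, c, d, hmem, hB'k⟩
    · exact Or.inl hk
    · exact Or.inr ⟨hBk, c, d, List.mem_append_left _ hmem, hB'k⟩
  add_mem c' k d hmem := by
    rcases List.mem_append.1 hmem with hmem | hmem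
    · obtain ⟨c, hc⟩ := h.add_mem c' k d hmem
      exact ⟨c, List.mem_append_left _ hc⟩
    · exact ⟨c', List.mem_append_right _ hmem⟩

theorem remove_of_base_eq_none (h : IsReaddRefactoring B L B' L') {k : α} (hk : B' k = none) :
    ∀ op ∈ L', op.2.1 = k → op.2.2 = none := by
  intro op hop hopk
  refine (h.remove_or_readd op hop).resolve_right fun hadd => hadd.2 ?_
  rwa [hopk]

theorem append_add_of_base_eq_none (h : IsReaddRefactoring B L B' L') (c : ρ → Prop) {k : α}
    (d : β) (hk : B' k = none) :
    IsReaddRefactoring B (L ++ [(c, k, some d)]) (update B' k (some d))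
      (L'.filter (·.2.1 ≠ k) ++ [(fun p => ¬ c p, k, none)]) where
  variant_eq p := by
    have hfilter : ∀ op ∈ L'.filter (·.2.1 ≠ k), op.2.1 ≠ k := fun op hop => by
      simpa using (List.mem_filter.1 hop).2
    have hdead : variant B' (L'.filter (·.2.1 ≠ k)) p = variant B L p :=
      (variant_filter_ne_of_remove (h.remove_of_base_eq_none hk) hk p).trans (h.variant_eq p)
    have hV : variant B L p k = none := by
      rw [← hdead, variant_apply_of_forall_ne hfilter, hk]
    rw [variant_append_singleton, variant_append_singleton, variant_update_of_forall_ne hfilter,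
      hdead]
    by_cases hc : c p <;> simp [hc, hV]
  remove_or_readd op hop := by
    rcases List.mem_append.1 hop with hop | hop
    · refine (h.remove_or_readd op (List.mem_filter.1 hop).1).imp_right fun hadd => ⟨hadd.1, ?_⟩
      by_cases hopk : op.2.1 = k
      · simp [hopk]
      · rw [update_of_ne hopk]; exact hadd.2
    · exact Or.inl (by rw [List.mem_singleton.1 hop])
  length_le := by
    simpa using (List.length_filter_le _ L').trans h.length_le
  base_eq_or_added k' := by
    by_cases hk' : k' = k
    · subst hk'
      have hBk : B k' = none := (h.base_eq_or_added k').elim (fun h' => h' ▸ hk) (·.1)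
      exact Or.inr ⟨hBk, c, d, List.mem_append_right _ (List.mem_singleton_self _), update_self ..⟩
    · rw [update_of_ne hk']
      rcases h.base_eq_or_added k' with hk | ⟨hBk, c, d, hmem, hB'k⟩
      · exact Or.inl hk
      · exact Or.inr ⟨hBk, c, d, List.mem_append_left _ hmem, hB'k⟩
  add_mem c' k' d' hmem := by
    rcases List.mem_append.1 hmem with hmem | hmem
    · obtain ⟨c, hc⟩ := h.add_mem c' k' d' (List.mem_filter.1 hmem).1
      exact ⟨c, List.mem_append_left _ hc⟩
    · simp at hmem

end IsReaddRefactoring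

end Refactoring

/-- Decreasing-monotonic (readd) refactoring theorem: every SPL is equivalent to a
readd-strictly-decreasing monotonic one, without code duplication. -/
theorem decreasing_refactoring {α β ρ : Type*} (B : α → Option β)
    (L : List ((ρ → Prop) × α × Option β)) :
    ∃ (B' : α → Option β) (L' : List ((ρ → Prop) × α × Option β)),
      (∀ p : ρ, variant B' L' p = variant B L p) ∧
      (∀ op ∈ L', op.2.2 = none ∨ (∃ d : β, op.2.2 = some d) ∧ B' op.2.1 ≠ none) ∧
      L'.length ≤ L.length ∧
      (∀ k : α, B' k = B k ∨
        (B k = none ∧ ∃ (c : ρ → Prop) (d : β), (c, k, some d) ∈ L ∧ B' k = some d)) ∧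
      (∀ (c' : ρ → Prop) (k : α) (d : β), (c', k, some d) ∈ L' →
        ∃ c : ρ → Prop, (c, k, some d) ∈ L) := by
  suffices ∃ B' L', IsReaddRefactoring B L B' L' by
    obtain ⟨B', L', h⟩ := this
    exact ⟨B', L', h.variant_eq, h.remove_or_readd, h.length_le, h.base_eq_or_added, h.add_mem⟩
  induction L using List.reverseRecOn with
  | nil => exact ⟨B, [], .nil B⟩
  | append_singleton L op ih =>
    obtain ⟨B', L', h⟩ := ih
    obtain ⟨c, k, _ | d⟩ := op
    · exact ⟨B', _, h.append _ (Or.inl rfl)⟩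
    · by_cases hk : B' k = none
      · exact ⟨_, _, h.append_add_of_base_eq_none c d hk⟩
      · exact ⟨B', _, h.append _ (Or.inr ⟨⟨d, rfl⟩, hk⟩)⟩
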